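/- arXiv:1807.04163 — 2 statements merged into one kernel-verified Lean document; each statement's English description precedes it below -/
import Mathlib

section
/- Lemma 5.5 (Approximation Guarantee, existence form): For every ε with 0 < ε < 1 and every rent-division instance v satisfying the standing assumptions, there exist utility functions v̄ : Fin n → Fin n → ℝ → ℝ such that (i) each v̄ a r is continuous, strictly decreasing, and piecewise linear, (ii) on every affine piece of every v̄ a r the slope equals −(1+ε)^k for some integer k (all slopes are integer powers of (1+ε) in magnitude), and (iii) every envy-free solution (π, p) of the instance with utilities v̄ is an ε-envy-free solution of the instance with utilities v. -/
/-- A function `f : ℝ → ℝ` is piecewise linear with all slopes in `S`: there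
are finitely many breakpoints `b 0 < … < b t` such that `f` is affine on
`(-∞, b 0]`, on each `[b i, b (i+1)]`, and on `[b t, ∞)`, with each affine
piece having slope in `S`. -/
def PiecewiseLinearWith (S : ℝ → Prop) (f : ℝ → ℝ) : Prop :=
  ∃ (t : ℕ) (b : Fin (t + 1) → ℝ), StrictMono b ∧
    (∃ m c : ℝ, S m ∧ ∀ x ≤ b 0, f x = m * x + c) ∧
    (∀ i : Fin t, ∃ m c : ℝ, S m ∧
      ∀ x ∈ Set.Icc (b i.castSucc) (b i.succ), f x = m * x + c) ∧
    (∃ m c : ℝ, S m ∧ ∀ x, b (Fin.last t) ≤ x → f x = m * x + c)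

/-- A function `f : ℝ → ℝ` is piecewise linear. -/
def PiecewiseLinear (f : ℝ → ℝ) : Prop :=
  PiecewiseLinearWith (fun _ => True) f

/-- A solution `(π, p)` is `ε`-envy-free. -/
def EpsEF (n : ℕ) (ε : ℝ) (v : Fin n → Fin n → ℝ → ℝ)
    (π : Equiv.Perm (Fin n)) (p : Fin n → ℝ) : Prop :=
  ∀ a : Fin n,
    (0 ≤ v a (π a) (p (π a)) →
      ∀ r, v a r (p r) ≤ (1 + ε) * v a (π a) (p (π a))) ∧
    (v a (π a) (p (π a)) < 0 →
      ∀ r, (1 + ε) * v a r (p r) ≤ v a (π a) (p (π a)))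

/-!
Write a strictly decreasing piecewise-linear `f` as a constant plus a weighted sum of ramps, one
ramp per affine piece, the weights being the (negative) slopes. Rounding every slope `m` to some
`-(1 + ε) ^ k ∈ [(1 + ε) m, m]` gives a function `g` whose decrease over any interval lies between
that of `f` and `1 + ε` times it. Normalising `g` to vanish at a root of `f` (there is one, since
`f 0 ≥ 0` and `f` falls linearly on its last piece) places `g x` between `f x` and `(1 + ε) f x`,
on the side away from zero, and this turns envy-freeness for the rounded utilities into
`ε`-envy-freeness for the original ones.
-/

open Set

def clampIcc (lo hi x : ℝ) : ℝ := min (max x lo) hi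

section clampIcc

variable {lo hi x : ℝ}

lemma clampIcc_of_le (h : lo ≤ hi) (hx : x ≤ lo) : clampIcc lo hi x = lo := by
  rw [clampIcc, max_eq_right hx, min_eq_left h]

lemma clampIcc_of_ge (h : lo ≤ hi) (hx : hi ≤ x) : clampIcc lo hi x = hi := by
  rw [clampIcc, max_eq_left (h.trans hx), min_eq_right hx]

lemma clampIcc_of_mem (hx : x ∈ Icc lo hi) : clampIcc lo hi x = x := by
  rw [clampIcc, max_eq_left hx.1, min_eq_left hx.2]

lemma clampIcc_mono : Monotone (clampIcc lo hi) :=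
  fun _ _ hxy => min_le_min_right _ (max_le_max_right _ hxy)

end clampIcc

/-- The function vanishing at `b 0` with slope `sL` on `(-∞, b 0]`, slope `s j` on
`[b j, b (j + 1)]` and slope `sR` on `[b t, ∞)`. -/
def rampSum {t : ℕ} (b : Fin (t + 1) → ℝ) (sL : ℝ) (s : Fin t → ℝ) (sR x : ℝ) : ℝ :=
  sL * (min x (b 0) - b 0) + ∑ j, s j * (clampIcc (b j.castSucc) (b j.succ) x - b j.castSucc)
    + sR * max (x - b (Fin.last t)) 0

section rampSum

variable {t : ℕ} {b : Fin (t + 1) → ℝ} {sL sR : ℝ} {s : Fin t → ℝ}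

lemma continuous_rampSum : Continuous (rampSum b sL s sR) := by
  unfold rampSum clampIcc; fun_prop

lemma rampSum_sub (x y : ℝ) : rampSum b sL s sR y - rampSum b sL s sR x =
    sL * (min y (b 0) - min x (b 0))
      + ∑ j, s j * (clampIcc (b j.castSucc) (b j.succ) y - clampIcc (b j.castSucc) (b j.succ) x)
      + sR * (max (y - b (Fin.last t)) 0 - max (x - b (Fin.last t)) 0) := by
  simp only [rampSum, mul_sub, Finset.sum_sub_distrib]; ring

lemma rampSum_const_mul (c x : ℝ) :
    rampSum b (c * sL) (fun j => c * s j) (c * sR) x = c * rampSum b sL s sR x := by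
  simp only [rampSum, Finset.mul_sum, mul_add, mul_assoc]

lemma rampSum_sub_le_sub {sL' sR' : ℝ} {s' : Fin t → ℝ} (hL : sL ≤ sL') (hs : ∀ j, s j ≤ s' j)
    (hR : sR ≤ sR') {x y : ℝ} (hxy : x ≤ y) :
    rampSum b sL s sR y - rampSum b sL s sR x ≤
      rampSum b sL' s' sR' y - rampSum b sL' s' sR' x := by
  rw [rampSum_sub, rampSum_sub]
  gcongr ?_ + ∑ j, ?_ + ?_ with j
  · exact mul_le_mul_of_nonneg_right hL (sub_nonneg.2 (min_le_min_right _ hxy))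
  · exact mul_le_mul_of_nonneg_right (hs j) (sub_nonneg.2 (clampIcc_mono hxy))
  · exact mul_le_mul_of_nonneg_right hR
      (sub_nonneg.2 (max_le_max_right _ (sub_le_sub_right hxy _)))

variable (hb : Monotone b)
include hb

lemma rampSum_of_le (x : ℝ) (hx : x ≤ b 0) : rampSum b sL s sR x = sL * (x - b 0) := by
  have hle : ∀ j : Fin t, x ≤ b j.castSucc := fun j => hx.trans (hb (Fin.zero_le _))
  rw [rampSum, min_eq_left hx, Finset.sum_eq_zero fun j _ => by
    rw [clampIcc_of_le (hb (Fin.castSucc_le_succ j)) (hle j), sub_self, mul_zero],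
    max_eq_right (sub_nonpos.2 (hx.trans (hb (Fin.zero_le _)))), mul_zero, add_zero,
    add_zero]

lemma rampSum_sub_of_mem_Icc (i : Fin t) (x : ℝ) (hx : x ∈ Icc (b i.castSucc) (b i.succ)) :
    rampSum b sL s sR x - rampSum b sL s sR (b i.castSucc) = s i * (x - b i.castSucc) := by
  have h0 : b 0 ≤ b i.castSucc := hb (Fin.zero_le _)
  have hlast : b i.succ ≤ b (Fin.last t) := hb (Fin.le_last _)
  have hgap : ∀ j : Fin t, b j.castSucc ≤ b j.succ := fun j => hb (Fin.castSucc_le_succ j)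
  have hother : ∀ j ≠ i, clampIcc (b j.castSucc) (b j.succ) x
      = clampIcc (b j.castSucc) (b j.succ) (b i.castSucc) := by
    intro j hj
    rcases hj.lt_or_gt with h | h
    · have hji : b j.succ ≤ b i.castSucc := hb (Fin.succ_le_castSucc_iff.2 h)
      rw [clampIcc_of_ge (hgap j) (hji.trans hx.1), clampIcc_of_ge (hgap j) hji]
    · have hij : b i.succ ≤ b j.castSucc := hb (Fin.succ_le_castSucc_iff.2 h)
      rw [clampIcc_of_le (hgap j) (hx.2.trans hij), clampIcc_of_le (hgap j) ((hgap i).trans hij)]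
  rw [rampSum_sub, Finset.sum_eq_single i (fun j _ hj => by rw [hother j hj, sub_self, mul_zero])
      (by simp), clampIcc_of_mem hx, clampIcc_of_le (hgap i) le_rfl,
    min_eq_right (h0.trans hx.1), min_eq_right h0, max_eq_right (sub_nonpos.2 (hx.2.trans hlast)),
    max_eq_right (sub_nonpos.2 ((hgap i).trans hlast))]
  ring

lemma rampSum_sub_of_ge (x : ℝ) (hx : b (Fin.last t) ≤ x) :
    rampSum b sL s sR x - rampSum b sL s sR (b (Fin.last t)) = sR * (x - b (Fin.last t)) := by
  have h0 : b 0 ≤ b (Fin.last t) := hb (Fin.zero_le _)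
  have hsucc : ∀ j : Fin t, b j.succ ≤ b (Fin.last t) := fun j => hb (Fin.le_last _)
  have hgap : ∀ j : Fin t, b j.castSucc ≤ b j.succ := fun j => hb (Fin.castSucc_le_succ j)
  rw [rampSum_sub, Finset.sum_eq_zero fun j _ => by
      rw [clampIcc_of_ge (hgap j) ((hsucc j).trans hx), clampIcc_of_ge (hgap j) (hsucc j),
        sub_self, mul_zero],
    min_eq_right (h0.trans hx), min_eq_right h0, max_eq_left (sub_nonneg.2 hx)]
  simp

end rampSum

lemma piecewiseLinearWith_rampSum_add {S : ℝ → Prop} {t : ℕ} {b : Fin (t + 1) → ℝ}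
    (hb : StrictMono b) {sL sR : ℝ} {s : Fin t → ℝ} (hL : S sL) (hs : ∀ i, S (s i)) (hR : S sR)
    (c : ℝ) : PiecewiseLinearWith S (fun x => rampSum b sL s sR x + c) := by
  refine ⟨t, b, hb, ⟨sL, c - sL * b 0, hL, fun x hx => ?_⟩,
    fun i => ⟨s i, rampSum b sL s sR (b i.castSucc) + c - s i * b i.castSucc, hs i, fun x hx => ?_⟩,
    ⟨sR, rampSum b sL s sR (b (Fin.last t)) + c - sR * b (Fin.last t), hR, fun x hx => ?_⟩⟩
  · dsimp only
    rw [rampSum_of_le hb.monotone x hx]; ring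
  · linear_combination rampSum_sub_of_mem_Icc hb.monotone (sL := sL) (s := s) (sR := sR) i x hx
  · linear_combination rampSum_sub_of_ge hb.monotone (sL := sL) (s := s) (sR := sR) x hx

theorem PiecewiseLinearWith.exists_eq_rampSum_add {S : ℝ → Prop} {f : ℝ → ℝ}
    (h : PiecewiseLinearWith S f) :
    ∃ (t : ℕ) (b : Fin (t + 1) → ℝ) (sL : ℝ) (s : Fin t → ℝ) (sR c : ℝ), StrictMono b ∧
      S sL ∧ (∀ i, S (s i)) ∧ S sR ∧ ∀ x, f x = rampSum b sL s sR x + c := by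
  obtain ⟨t, b, hb, ⟨sL, cL, hL, hfL⟩, hmid, ⟨sR, cR, hR, hfR⟩⟩ := h
  choose s cs hs hfs using hmid
  have hle : ∀ i : Fin (t + 1), ∀ x ≤ b i, f x = rampSum b sL s sR x + (sL * b 0 + cL) := by
    intro i
    induction i using Fin.induction with
    | zero => intro x hx; rw [hfL x hx, rampSum_of_le hb.monotone x hx]; ring
    | succ i ih =>
      intro x hx
      rcases le_or_gt x (b i.castSucc) with h | h
      · exact ih x h
      · have hxi : x ∈ Icc (b i.castSucc) (b i.succ) := ⟨h.le, hx⟩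
        have hbi : b i.castSucc ∈ Icc (b i.castSucc) (b i.succ) :=
          ⟨le_rfl, hb.monotone (Fin.castSucc_le_succ i)⟩
        linear_combination hfs i x hxi - hfs i _ hbi + ih _ le_rfl
          - rampSum_sub_of_mem_Icc hb.monotone (sL := sL) (s := s) (sR := sR) i x hxi
  refine ⟨t, b, sL, s, sR, sL * b 0 + cL, hb, hL, hs, hR, fun x => ?_⟩
  rcases le_or_gt x (b (Fin.last t)) with h | h
  · exact hle _ x h
  · linear_combination hfR x h.le - hfR _ le_rfl + hle _ _ le_rfl
      - rampSum_sub_of_ge hb.monotone (sL := sL) (s := s) (sR := sR) x h.le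

lemma StrictAnti.slope_neg {f : ℝ → ℝ} (hf : StrictAnti f) {m c x y : ℝ} (hxy : x < y)
    (hx : f x = m * x + c) (hy : f y = m * y + c) : m < 0 := by
  nlinarith [hf hxy]

theorem PiecewiseLinearWith.and_neg_of_strictAnti {S : ℝ → Prop} {f : ℝ → ℝ}
    (h : PiecewiseLinearWith S f) (hf : StrictAnti f) :
    PiecewiseLinearWith (fun m => S m ∧ m < 0) f := by
  obtain ⟨t, b, hb, ⟨mL, cL, hL, hfL⟩, hmid, ⟨mR, cR, hR, hfR⟩⟩ := h
  refine ⟨t, b, hb, ⟨mL, cL, ⟨hL, ?_⟩, hfL⟩, fun i => ?_, ⟨mR, cR, ⟨hR, ?_⟩, hfR⟩⟩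
  · exact hf.slope_neg (sub_one_lt (b 0)) (hfL _ (by linarith)) (hfL _ le_rfl)
  · obtain ⟨m, c, hm, hfm⟩ := hmid i
    have hlt : b i.castSucc < b i.succ := hb Fin.castSucc_lt_succ
    exact ⟨m, c, ⟨hm, hf.slope_neg hlt (hfm _ ⟨le_rfl, hlt.le⟩) (hfm _ ⟨hlt.le, le_rfl⟩)⟩, hfm⟩
  · exact hf.slope_neg (lt_add_one _) (hfR _ le_rfl) (hfR _ (by linarith))

lemma exists_neg_zpow_mem_Icc {β m : ℝ} (hβ : 1 < β) (hm : m < 0) :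
    ∃ k : ℤ, -β ^ k ∈ Icc (β * m) m := by
  obtain ⟨k, hk₁, hk₂⟩ := exists_mem_Ioc_zpow (neg_pos.2 hm) hβ
  refine ⟨k + 1, ?_, by linarith⟩
  rw [zpow_add_one₀ (by positivity)]
  nlinarith

lemma exists_eq_zero_of_affine_tail {f : ℝ → ℝ} (hf : Continuous f) (h0 : 0 ≤ f 0) {m B : ℝ}
    (hm : m < 0) (hB : ∀ x, B ≤ x → f x - f B = m * (x - B)) : ∃ z, f z = 0 := by
  have hd : 0 ≤ |f B| / -m := div_nonneg (abs_nonneg _) (by linarith)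
  have hBx : B + |f B| / -m ≤ max 0 B + |f B| / -m := by linarith [le_max_right 0 B]
  have hx₁ : f (max 0 B + |f B| / -m) ≤ 0 := by
    have hstep := mul_le_mul_of_nonpos_left (sub_le_sub_right hBx B) hm.le
    have hcancel : m * (B + |f B| / -m - B) = -|f B| := by
      field_simp [hm.ne]; ring
    linarith [hB (max 0 B + |f B| / -m) (by linarith), le_abs_self (f B)]
  obtain ⟨z, -, hz⟩ := intermediate_value_Icc' (by positivity) hf.continuousOn (mem_Icc.2 ⟨hx₁, h0⟩)
  exact ⟨z, hz⟩

def MulApprox (c : ℝ) (f g : ℝ → ℝ) : Prop :=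
  ∀ x, (0 ≤ f x → f x ≤ g x ∧ g x ≤ c * f x) ∧ (f x < 0 → c * f x ≤ g x ∧ g x ≤ f x)

lemma mulApprox_of_sub_le_sub {c z : ℝ} {f g : ℝ → ℝ} (hf : StrictAnti f) (hfz : f z = 0)
    (hgz : g z = 0)
    (hinc : ∀ x y, x ≤ y → f x - f y ≤ g x - g y ∧ g x - g y ≤ c * (f x - f y)) :
    MulApprox c f g := by
  intro x
  constructor
  · intro hx
    have hxz : x ≤ z := not_lt.1 fun h => (hf h).not_ge (hfz ▸ hx)
    simpa [hfz, hgz] using hinc x z hxz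
  · intro hx
    have hzx : z ≤ x := not_lt.1 fun h => (hf h).not_ge (hfz ▸ hx.le)
    have h := hinc z x hzx
    rw [hfz, hgz] at h
    constructor <;> linarith [h.1, h.2]

theorem exists_mulApprox_zpow_slopes {ε : ℝ} (hε : 0 < ε) {f : ℝ → ℝ} (hpl : PiecewiseLinear f)
    (hf : StrictAnti f) (h0 : 0 ≤ f 0) :
    ∃ g : ℝ → ℝ, Continuous g ∧ StrictAnti g ∧
      PiecewiseLinearWith (fun m => ∃ k : ℤ, m = -((1 + ε) ^ k)) g ∧ MulApprox (1 + ε) f g := by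
  obtain ⟨t, b, sL, s, sR, c, hb, hL, hs, hR, hfF⟩ :=
    (hpl.and_neg_of_strictAnti hf).exists_eq_rampSum_add
  have hβ : 1 < 1 + ε := by linarith
  obtain ⟨kL, hkL⟩ := exists_neg_zpow_mem_Icc hβ hL.2
  choose k hk using fun i => exists_neg_zpow_mem_Icc hβ (hs i).2
  obtain ⟨kR, hkR⟩ := exists_neg_zpow_mem_Icc hβ hR.2
  set G := rampSum b (-(1 + ε) ^ kL) (fun i => -(1 + ε) ^ k i) (-(1 + ε) ^ kR)
  have hfc : Continuous f := (continuous_rampSum.add continuous_const).congr fun x => (hfF x).symm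
  obtain ⟨z, hz⟩ := exists_eq_zero_of_affine_tail hfc h0 hR.2 fun x hx => by
    rw [hfF, hfF, add_sub_add_right_eq_sub]; exact rampSum_sub_of_ge hb.monotone x hx
  have hinc : ∀ x y, x ≤ y → f x - f y ≤ G x - G y ∧ G x - G y ≤ (1 + ε) * (f x - f y) := by
    intro x y hxy
    have hup := rampSum_sub_le_sub (b := b) hkL.2 (fun i => (hk i).2) hkR.2 hxy
    have hlow := rampSum_sub_le_sub (b := b) hkL.1 (fun i => (hk i).1) hkR.1 hxy
    rw [rampSum_const_mul, rampSum_const_mul] at hlow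
    rw [hfF x, hfF y]
    constructor <;> linarith
  refine ⟨fun x => G x - G z, continuous_rampSum.sub continuous_const,
    fun x y hxy => by linarith [hinc x y hxy.le, hf hxy], ?_,
    mulApprox_of_sub_le_sub hf hz (sub_self _) fun x y hxy => by simpa using hinc x y hxy⟩
  simpa only [sub_eq_add_neg] using
    piecewiseLinearWith_rampSum_add hb ⟨kL, rfl⟩ (fun i => ⟨k i, rfl⟩) ⟨kR, rfl⟩ (-G z)

theorem EpsEF.of_envyFree_of_mulApprox {n : ℕ} {ε : ℝ} (hε : 0 ≤ 1 + ε)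
    {v vbar : Fin n → Fin n → ℝ → ℝ} (happrox : ∀ a r, MulApprox (1 + ε) (v a r) (vbar a r))
    {π : Equiv.Perm (Fin n)} {p : Fin n → ℝ}
    (hEF : ∀ a r, vbar a r (p r) ≤ vbar a (π a) (p (π a))) : EpsEF n ε v π p := by
  intro a
  constructor
  · intro hown r
    have hup := ((happrox a (π a) _).1 hown).2
    rcases le_or_gt 0 (v a r (p r)) with hr | hr
    · linarith [((happrox a r _).1 hr).1, hEF a r]
    · nlinarith
  · intro hown r
    have hup := ((happrox a (π a) _).2 hown).2
    rcases lt_or_ge (v a r (p r)) 0 with hr | hr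
    · linarith [((happrox a r _).2 hr).1, hEF a r]
    · linarith [((happrox a r _).1 hr).1, hEF a r]

theorem approximation_guarantee_general
    (n : ℕ) (ε : ℝ) (hε₀ : 0 < ε)
    (v : Fin n → Fin n → ℝ → ℝ)
    (hanti : ∀ a r, StrictAnti (v a r))
    (hpl : ∀ a r, PiecewiseLinear (v a r))
    (hnonneg : ∀ a r, 0 ≤ v a r 0) :
    ∃ vbar : Fin n → Fin n → ℝ → ℝ,
      (∀ a r, Continuous (vbar a r) ∧ StrictAnti (vbar a r) ∧
        PiecewiseLinearWith
          (fun m => ∃ k : ℤ, m = -((1 + ε) ^ k)) (vbar a r)) ∧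
      ∀ (π : Equiv.Perm (Fin n)) (p : Fin n → ℝ),
        (∀ a r, vbar a r (p r) ≤ vbar a (π a) (p (π a))) →
        EpsEF n ε v π p := by
  choose vbar hcont hanti' hpl' happrox using fun a r =>
    exists_mulApprox_zpow_slopes hε₀ (hpl a r) (hanti a r) (hnonneg a r)
  exact ⟨vbar, fun a r => ⟨hcont a r, hanti' a r, hpl' a r⟩,
    fun π p hEF => EpsEF.of_envyFree_of_mulApprox (by linarith) happrox hEF⟩

/-- Lemma 5.5 (Approximation Guarantee, existence form): any instance can be
rounded to a structured instance whose slopes are integer powers of `1 + ε`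
(in magnitude), in such a way that every envy-free solution of the rounded
instance is an `ε`-envy-free solution of the original instance. -/
theorem approximation_guarantee
    (n : ℕ) (ε : ℝ) (hε₀ : 0 < ε) (hε₁ : ε < 1)
    (v : Fin n → Fin n → ℝ → ℝ)
    (hcont : ∀ a r, Continuous (v a r))
    (hanti : ∀ a r, StrictAnti (v a r))
    (hpl : ∀ a r, PiecewiseLinear (v a r))
    (hnonneg : ∀ a r, 0 ≤ v a r 0) :
    ∃ vbar : Fin n → Fin n → ℝ → ℝ,
      (∀ a r, Continuous (vbar a r) ∧ StrictAnti (vbar a r) ∧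
        PiecewiseLinearWith
          (fun m => ∃ k : ℤ, m = -((1 + ε) ^ k)) (vbar a r)) ∧
      ∀ (π : Equiv.Perm (Fin n)) (p : Fin n → ℝ),
        (∀ a r, vbar a r (p r) ≤ vbar a (π a) (p (π a))) →
        EpsEF n ε v π p :=
  approximation_guarantee_general n ε hε₀ v hanti hpl hnonneg
end

section
/- Existence of envy-free solutions with nonnegative prices for linear utilities (content of the Ef-Linear totality claim, proved in the paper via a reduction to Nash equilibria of polymatrix games): Let H : Fin n → Fin n → ℝ and λ : Fin n → Fin n → ℝ with λ a r > 0 for all a, r, and define utilities v a r x := H a r − λ a r · x. Then there exist a permutation π of Fin n and a price vector p : Fin n → ℝ with p r ≥ 0 for all rooms r such that (π, p) is an envy-free solution. -/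
/-!
Run an ascending auction with bid increment `ε`: an unassigned agent bids for a room it likes
best, takes it from its holder and raises its price by `ε`. While some agent is unassigned some
room is unsold at price `0`, which bounds every bid, so the auction stops, in an assignment that
is envy-free up to `(max λ) · ε`. For each of the finitely many assignments the total envy, a
continuous function of the prices, has a minimum on a compact box of prices; the least of these
minima lies below the envy of every approximate solution, hence is `0`.
-/

open Finset

namespace RentDivision

variable {ι : Type*}

def IsEnvyFreeUpTo (v : ι → ι → ℝ → ℝ) (δ : ℝ) (π : Equiv.Perm ι) (p : ι → ℝ) : Prop :=
  ∀ a r, v a r (p r) ≤ v a (π a) (p (π a)) + δ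

theorem exists_and_of_bounded_progress {α : Type*} {P Q : α → Prop} (f : α → ℕ) (N : ℕ)
    (hN : ∀ x, P x → f x ≤ N) (hstep : ∀ x, P x → ¬ Q x → ∃ y, P y ∧ f x < f y)
    {x : α} (hx : P x) : ∃ y, P y ∧ Q y := by
  induction hk : N - f x using Nat.strong_induction_on generalizing x with
  | _ k ih =>
    by_cases hQ : Q x
    · exact ⟨x, hx, hQ⟩
    · obtain ⟨y, hy, hxy⟩ := hstep x hx hQ
      exact ih (N - f y) (by have := hN y hy; omega) hy rfl

section PartialMatching

variable {μ : ι → Option ι}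

def IsPartialMatching (μ : ι → Option ι) : Prop :=
  ∀ a b r, μ a = some r → μ b = some r → a = b

theorem exists_forall_ne_some_of_eq_none [Finite ι] {a : ι} (ha : μ a = none) :
    ∃ s, ∀ b, μ b ≠ some s := by
  by_contra! hcon
  choose g hg using hcon
  have hg_inj : Function.Injective g := fun s s' h =>
    Option.some_injective _ ((hg s).symm.trans (h ▸ hg s'))
  obtain ⟨s, rfl⟩ := (Finite.injective_iff_surjective.mp hg_inj) a
  exact Option.some_ne_none s ((hg s).symm.trans ha)

theorem IsPartialMatching.exists_perm [Finite ι] (hμ : IsPartialMatching μ)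
    (hall : ∀ a, μ a ≠ none) : ∃ π : Equiv.Perm ι, ∀ a, μ a = some (π a) := by
  choose f hf using fun a => Option.ne_none_iff_exists'.mp (hall a)
  have hf_inj : Function.Injective f := fun a b h => hμ a b (f a) (hf a) (h ▸ hf b)
  exact ⟨Equiv.ofBijective f (Finite.injective_iff_bijective.mp hf_inj), hf⟩

variable [DecidableEq ι]

def reassign (μ : ι → Option ι) (a r : ι) (b : ι) : Option ι :=
  if b = a then some r else if μ b = some r then none else μ b

theorem reassign_eq_some_iff {a r b x : ι} :
    reassign μ a r b = some x ↔ b = a ∧ x = r ∨ b ≠ a ∧ x ≠ r ∧ μ b = some x := by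
  unfold reassign
  split_ifs <;> grind

theorem IsPartialMatching.reassign (hμ : IsPartialMatching μ) (a r : ι) :
    IsPartialMatching (reassign μ a r) := by
  intro b b' x hb hb'
  rw [reassign_eq_some_iff] at hb hb'
  grind [IsPartialMatching]

end PartialMatching

section Auction

variable {v : ι → ι → ℝ → ℝ} {ε δ M : ℝ}

/-- A state of the ascending auction with increment `ε`: agent `a` holds room `r` when
`μ a = some r`, and room `r` has received `c r` bids, so its price is `ε * c r`. -/
structure IsAuctionState (v : ι → ι → ℝ → ℝ) (ε δ M : ℝ) (μ : ι → Option ι) (c : ι → ℕ) :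
    Prop where
  isPartialMatching : IsPartialMatching μ
  envy_le : ∀ a r, μ a = some r → ∀ r', v a r' (ε * c r') ≤ v a r (ε * c r) + δ
  bids_eq_zero : ∀ r, (∀ a, μ a ≠ some r) → c r = 0
  price_le : ∀ r, ε * c r ≤ M + ε

theorem IsAuctionState.bids_le {μ : ι → Option ι} {c : ι → ℕ}
    (hst : IsAuctionState v ε δ M μ c) (hε : 0 < ε) (r : ι) : c r ≤ ⌈(M + ε) / ε⌉₊ := by
  rw [← Nat.cast_le (α := ℝ)]
  refine le_trans ?_ (Nat.le_ceil _)
  rw [le_div_iff₀ hε, mul_comm]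
  exact hst.price_le r

variable [Fintype ι] (hanti : ∀ a r, Antitone (v a r))
  (hdrop : ∀ a r x, v a r x ≤ v a r (x + ε) + δ) (hM : ∀ a r s x, v a s 0 ≤ v a r x → x ≤ M)
include hanti hdrop hM

theorem IsAuctionState.exists_bid [DecidableEq ι] (hε : 0 ≤ ε) {μ : ι → Option ι} {c : ι → ℕ}
    (hst : IsAuctionState v ε δ M μ c) {a : ι} (ha : μ a = none) :
    ∃ μ' c', IsAuctionState v ε δ M μ' c' ∧ ∑ r, c r < ∑ r, c' r := by
  have : Nonempty ι := ⟨a⟩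
  obtain ⟨s, hs⟩ := exists_forall_ne_some_of_eq_none ha
  obtain ⟨r, hr⟩ := Finite.exists_max fun r => v a r (ε * c r)
  set c' := Function.update c r (c r + 1)
  have hc'r : ε * c' r = ε * c r + ε := by simp [c', mul_add]
  have hc'x : ∀ x ≠ r, c' x = c x := fun x hx => Function.update_of_ne hx _ c
  have hcc' : ∀ x, c x ≤ c' x := fun x => by
    by_cases hx : x = r
    · subst hx; simp [c']
    · rw [hc'x x hx]
  have hprice : ∀ b x, v b x (ε * c' x) ≤ v b x (ε * c x) := fun b x =>
    hanti b x (mul_le_mul_of_nonneg_left (by exact_mod_cast hcc' x) hε)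
  refine ⟨reassign μ a r, c', ⟨hst.isPartialMatching.reassign a r, ?_, ?_, ?_⟩,
    sum_lt_sum (fun x _ => hcc' x) ⟨r, mem_univ r, by simp [c']⟩⟩
  · intro b x hb r'
    rcases reassign_eq_some_iff.mp hb with ⟨rfl, rfl⟩ | ⟨-, hxr, hbx⟩
    · calc v b r' (ε * c' r') ≤ v b r' (ε * c r') := hprice b r'
        _ ≤ v b x (ε * c x) := hr r'
        _ ≤ v b x (ε * c' x) + δ := hc'r ▸ hdrop b x _
    · rw [hc'x x hxr]
      exact (hprice b r').trans (hst.envy_le b x hbx r')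
  · intro x hx
    have hxr : x ≠ r := fun h => hx a (reassign_eq_some_iff.mpr (.inl ⟨rfl, h⟩))
    rw [hc'x x hxr]
    refine hst.bids_eq_zero x fun b hb => hx b (reassign_eq_some_iff.mpr (.inr ⟨?_, hxr, hb⟩))
    rintro rfl
    simp [ha] at hb
  · intro x
    by_cases hxr : x = r
    · subst hxr
      have hbid : v a s 0 ≤ v a x (ε * c x) := by
        simpa [hst.bids_eq_zero s hs] using hr s
      linarith [hM a x s _ hbid]
    · rw [hc'x x hxr]
      exact hst.price_le x

theorem exists_isEnvyFreeUpTo_of_auction (hε : 0 < ε) :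
    ∃ π p, (∀ r, 0 ≤ p r ∧ p r ≤ M + ε) ∧ IsEnvyFreeUpTo v δ π p := by
  classical
  have hstart : IsAuctionState v ε δ M (fun _ => none) 0 :=
    ⟨fun _ _ _ h => (nomatch h), fun _ _ h => (nomatch h), fun _ _ => rfl,
      fun r => by simpa using (hM r r r 0 le_rfl).trans (le_add_of_nonneg_right hε.le)⟩
  obtain ⟨⟨μ, c⟩, hst, hall⟩ := exists_and_of_bounded_progress
    (P := fun s : (ι → Option ι) × (ι → ℕ) => IsAuctionState v ε δ M s.1 s.2)
    (Q := fun s => ∀ a, s.1 a ≠ none)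
    (fun s => ∑ r, s.2 r) (#univ • ⌈(M + ε) / ε⌉₊)
    (fun s hs => sum_le_card_nsmul _ _ _ fun r _ => hs.bids_le hε r)
    (fun s hs hQ => by
      obtain ⟨a, ha⟩ := not_forall_not.mp hQ
      obtain ⟨μ', c', h⟩ := hs.exists_bid hanti hdrop hM hε.le ha
      exact ⟨(μ', c'), h⟩)
    (x := (fun _ => none, 0)) hstart
  obtain ⟨π, hπ⟩ := hst.isPartialMatching.exists_perm hall
  refine ⟨π, fun r => ε * c r, fun r => ⟨by positivity, hst.price_le r⟩,
    fun a r => hst.envy_le a (π a) (hπ a) r⟩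

end Auction

section Compactness

variable [Fintype ι] {v : ι → ι → ℝ → ℝ}

def totalEnvy (v : ι → ι → ℝ → ℝ) (π : Equiv.Perm ι) (p : ι → ℝ) : ℝ :=
  ∑ a, ∑ r, max 0 (v a r (p r) - v a (π a) (p (π a)))

theorem continuous_totalEnvy (hv : ∀ a r, Continuous (v a r)) (π : Equiv.Perm ι) :
    Continuous (totalEnvy v π) := by
  unfold totalEnvy
  fun_prop

theorem totalEnvy_le {δ : ℝ} {π : Equiv.Perm ι} {p : ι → ℝ} (hδ : 0 ≤ δ)
    (h : IsEnvyFreeUpTo v δ π p) : totalEnvy v π p ≤ Fintype.card ι ^ 2 * δ :=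
  calc totalEnvy v π p ≤ ∑ _a : ι, ∑ _r : ι, δ :=
        sum_le_sum fun a _ => sum_le_sum fun r _ => max_le hδ (by linarith [h a r])
    _ = Fintype.card ι ^ 2 * δ := by simp [sq, mul_assoc]

theorem isEnvyFreeUpTo_zero_of_totalEnvy_nonpos {π : Equiv.Perm ι} {p : ι → ℝ}
    (h : totalEnvy v π p ≤ 0) : IsEnvyFreeUpTo v 0 π p := by
  intro a r
  have hterm : max 0 (v a r (p r) - v a (π a) (p (π a))) ≤ 0 :=
    calc max 0 (v a r (p r) - v a (π a) (p (π a)))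
        ≤ ∑ r', max 0 (v a r' (p r') - v a (π a) (p (π a))) :=
          single_le_sum (f := fun r' => max 0 (v a r' (p r') - v a (π a) (p (π a))))
            (fun _ _ => le_max_left _ _) (mem_univ r)
      _ ≤ totalEnvy v π p :=
          single_le_sum (f := fun a => ∑ r', max 0 (v a r' (p r') - v a (π a) (p (π a))))
            (fun _ _ => sum_nonneg fun _ _ => le_max_left _ _) (mem_univ a)
      _ ≤ 0 := h
  linarith [le_max_right 0 (v a r (p r) - v a (π a) (p (π a)))]

theorem exists_isEnvyFreeUpTo_zero_of_forall_pos (hv : ∀ a r, Continuous (v a r))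
    {C : Set (ι → ℝ)} (hC : IsCompact C)
    (happrox : ∀ δ > 0, ∃ π, ∃ p ∈ C, IsEnvyFreeUpTo v δ π p) :
    ∃ π, ∃ p ∈ C, IsEnvyFreeUpTo v 0 π p := by
  obtain ⟨-, q, hq, -⟩ := happrox 1 one_pos
  choose p hpC hpmin using fun π =>
    hC.exists_isMinOn ⟨q, hq⟩ (continuous_totalEnvy hv π).continuousOn
  obtain ⟨π₀, hπ₀⟩ := Finite.exists_min fun π => totalEnvy v π (p π)
  refine ⟨π₀, p π₀, hpC π₀, isEnvyFreeUpTo_zero_of_totalEnvy_nonpos ?_⟩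
  refine le_of_forall_pos_le_add fun δ hδ => ?_
  set N : ℝ := Fintype.card ι ^ 2
  obtain ⟨π, q, hqC, hq⟩ := happrox (δ / (N + 1)) (by positivity)
  calc totalEnvy v π₀ (p π₀) ≤ totalEnvy v π (p π) := hπ₀ π
    _ ≤ totalEnvy v π q := hpmin π hqC
    _ ≤ N * (δ / (N + 1)) := totalEnvy_le (by positivity) hq
    _ ≤ 0 + δ := by
      rw [zero_add, ← mul_div_assoc, div_le_iff₀ (by positivity)]
      nlinarith

end Compactness

theorem exists_isEnvyFreeUpTo_linear [Fintype ι] {H lam : ι → ι → ℝ}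
    (hlam : ∀ a r, 0 < lam a r) :
    ∃ M, ∀ δ > 0, ∃ π, ∃ p ∈ Set.Icc 0 (fun _ => M),
      IsEnvyFreeUpTo (fun a r x => H a r - lam a r * x) δ π p := by
  obtain ⟨M, hM⟩ := Finite.exists_le fun x : ι × ι × ι =>
    (H x.1 x.2.1 - H x.1 x.2.2) / lam x.1 x.2.1
  obtain ⟨Λ, hΛ⟩ := Finite.exists_le fun x : ι × ι => lam x.1 x.2
  refine ⟨M + 1, fun δ hδ => ?_⟩
  have hΛ₁ : 0 < max Λ 1 := lt_max_of_lt_right one_pos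
  set ε := min 1 (δ / max Λ 1)
  have hε : 0 < ε := lt_min one_pos (by positivity)
  have hdrop : ∀ a r, lam a r * ε ≤ δ := fun a r =>
    calc lam a r * ε ≤ max Λ 1 * (δ / max Λ 1) :=
          mul_le_mul ((hΛ (a, r)).trans (le_max_left _ _)) (min_le_right _ _) hε.le hΛ₁.le
      _ = δ := mul_div_cancel₀ δ hΛ₁.ne'
  obtain ⟨π, p, hp, hef⟩ := exists_isEnvyFreeUpTo_of_auction
    (v := fun a r x => H a r - lam a r * x) (ε := ε) (δ := δ) (M := M)
    (fun a r x y hxy => sub_le_sub_left (mul_le_mul_of_nonneg_left hxy (hlam a r).le) _)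
    (fun a r x => by linarith [hdrop a r])
    (fun a r s x h => by
      have hbound : (H a r - H a s) / lam a r ≤ M := hM (a, r, s)
      rw [div_le_iff₀ (hlam a r)] at hbound
      exact le_of_mul_le_mul_left (by linarith) (hlam a r))
    hε
  have hε₁ : ε ≤ 1 := min_le_left _ _
  exact ⟨π, p, ⟨fun r => (hp r).1, fun r => (hp r).2.trans (by linarith)⟩, hef⟩

end RentDivision

/-- Existence of envy-free solutions with nonnegative prices for linear
utilities `v a r x = H a r - λ a r · x` (totality of Ef-Linear). -/
theorem exists_envy_free_linear
    (n : ℕ) (H : Fin n → Fin n → ℝ) (lam : Fin n → Fin n → ℝ)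
    (hlam : ∀ a r, 0 < lam a r) :
    ∃ (π : Equiv.Perm (Fin n)) (p : Fin n → ℝ),
      (∀ r, 0 ≤ p r) ∧
      ∀ a r, H a r - lam a r * p r ≤
        H a (π a) - lam a (π a) * p (π a) := by
  obtain ⟨M, happrox⟩ := RentDivision.exists_isEnvyFreeUpTo_linear hlam
  obtain ⟨π, p, hp, hef⟩ :=
    RentDivision.exists_isEnvyFreeUpTo_zero_of_forall_pos (by fun_prop) isCompact_Icc happrox
  exact ⟨π, p, hp.1, fun a r => by simpa using hef a r⟩
end
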